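/- arXiv:2507.04204 — 4 statements merged into one kernel-verified Lean document; each statement's English description precedes it below -/
import Mathlib

section
/- Let (u_n) ⊂ ℓ^2(ℤ^d) be a bounded sequence converging pointwise to u. Then lim_{n→∞} (‖∇u_n‖_2^2 − ‖∇(u_n − u)‖_2^2) = ‖∇u‖_2^2, where ‖∇u‖_2^2 = ∑_{x∈ℤ^d} (1/2)∑_{y∼x} (u(y)−u(x))^2. -/
open Filter

/-- The `i`-th coordinate vector on the lattice `ℤ^d`. -/
def latticeE (d : ℕ) (i : Fin d) : Fin d → ℤ := fun j => if j = i then 1 else 0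

/-- The discrete gradient squared `|∇u|^2(x) = (1/2)∑_{y∼x}(u(y)−u(x))^2` on `ℤ^d`. -/
noncomputable def gradSq (d : ℕ) (u : (Fin d → ℤ) → ℝ) (x : Fin d → ℤ) : ℝ :=
  (1 / 2) * ∑ i : Fin d,
    ((u (x + latticeE d i) - u x) ^ 2 + (u (x - latticeE d i) - u x) ^ 2)

namespace BLAux

/-- direction vector of an oriented edge type -/
def dir (d : ℕ) (q : Fin d × Bool) : Fin d → ℤ :=
  if q.2 then latticeE d q.1 else -(latticeE d q.1)

/-- the difference of `u` along the oriented edge type `q` based at `x` -/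
noncomputable def fib (d : ℕ) (u : (Fin d → ℤ) → ℝ) (q : Fin d × Bool)
    (x : Fin d → ℤ) : ℝ :=
  u (x + dir d q) - u x

lemma fib_sub {d : ℕ} (u v : (Fin d → ℤ) → ℝ) (q : Fin d × Bool) (x : Fin d → ℤ) :
    fib d (fun y => u y - v y) q x = fib d u q x - fib d v q x := by
  simp only [fib]; ring

lemma gradSq_eq {d : ℕ} (u : (Fin d → ℤ) → ℝ) (x : Fin d → ℤ) :
    gradSq d u x = (1/2) * ∑ q : Fin d × Bool, (fib d u q x)^2 := by
  unfold gradSq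
  rw [Fintype.sum_prod_type]
  congr 1
  refine Finset.sum_congr rfl fun i _ => ?_
  rw [Fintype.sum_bool]
  simp only [fib, dir, if_pos, if_neg, Bool.false_eq_true, not_false_iff, if_true]
  rw [sub_eq_add_neg x (latticeE d i)]

lemma summable_sq_shift {d : ℕ} (u : (Fin d → ℤ) → ℝ)
    (hu : Summable fun x => (u x)^2) (c : Fin d → ℤ) :
    Summable fun x => (u (x + c))^2 :=
  ((Equiv.addRight c).summable_iff (f := fun x => (u x)^2)).2 hu

lemma tsum_sq_shift {d : ℕ} (u : (Fin d → ℤ) → ℝ) (c : Fin d → ℤ) :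
    ∑' x, (u (x + c))^2 = ∑' x, (u x)^2 :=
  (Equiv.addRight c).tsum_eq (fun x => (u x)^2)

lemma summable_fib_sq {d : ℕ} (u : (Fin d → ℤ) → ℝ)
    (hu : Summable fun x => (u x)^2) (q : Fin d × Bool) :
    Summable fun x => (fib d u q x)^2 := by
  refine Summable.of_nonneg_of_le (fun x => sq_nonneg _) (fun x => ?_)
    (((summable_sq_shift u hu (dir d q)).mul_left 2).add (hu.mul_left 2))
  simp only [fib]
  nlinarith [sq_nonneg (u (x + dir d q) + u x)]

lemma tsum_fib_sq_le {d : ℕ} (u : (Fin d → ℤ) → ℝ)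
    (hu : Summable fun x => (u x)^2) (q : Fin d × Bool) :
    ∑' x, (fib d u q x)^2 ≤ 4 * ∑' x, (u x)^2 := by
  have h1 : Summable fun x => 2 * (u (x + dir d q))^2 + 2 * (u x)^2 :=
    ((summable_sq_shift u hu (dir d q)).mul_left 2).add (hu.mul_left 2)
  calc ∑' x, (fib d u q x)^2
      ≤ ∑' x, (2 * (u (x + dir d q))^2 + 2 * (u x)^2) := by
        refine Summable.tsum_le_tsum (fun x => ?_) (summable_fib_sq u hu q) h1
        simp only [fib]
        nlinarith [sq_nonneg (u (x + dir d q) + u x)]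
    _ = 2 * ∑' x, (u (x + dir d q))^2 + 2 * ∑' x, (u x)^2 := by
        rw [Summable.tsum_add ((summable_sq_shift u hu (dir d q)).mul_left 2) (hu.mul_left 2),
          tsum_mul_left, tsum_mul_left]
    _ = 4 * ∑' x, (u x)^2 := by rw [tsum_sq_shift u (dir d q)]; ring

lemma tsum_gradSq {d : ℕ} (u : (Fin d → ℤ) → ℝ) (hu : Summable fun x => (u x)^2) :
    ∑' x, gradSq d u x = (1/2) * ∑ q : Fin d × Bool, ∑' x, (fib d u q x)^2 := by
  calc ∑' x, gradSq d u x
      = ∑' x, (1/2) * ∑ q : Fin d × Bool, (fib d u q x)^2 :=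
        tsum_congr fun x => gradSq_eq u x
    _ = (1/2) * ∑' x, ∑ q : Fin d × Bool, (fib d u q x)^2 := tsum_mul_left
    _ = (1/2) * ∑ q : Fin d × Bool, ∑' x, (fib d u q x)^2 := by
        rw [Summable.tsum_finsetSum (fun q _ => summable_fib_sq u hu q)]

lemma abs_mul_le (a b t : ℝ) (ht : 0 < t) : |a * b| ≤ 1/(2*t) * a^2 + t/2 * b^2 := by
  have h : |a * b| = |a| * |b| := abs_mul a b
  have h3 : |a * b| ≤ (a^2 + t^2*b^2) / (2*t) := by
    rw [le_div_iff₀ (by linarith)]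
    nlinarith [sq_nonneg (|a| - t * |b|), sq_abs a, sq_abs b]
  calc |a * b| ≤ (a^2 + t^2*b^2) / (2*t) := h3
    _ = 1/(2*t) * a^2 + t/2 * b^2 := by field_simp

lemma summable_mul {ι : Type*} (a b : ι → ℝ) (ha : Summable fun x => (a x)^2)
    (hb : Summable fun x => (b x)^2) : Summable fun x => |a x * b x| := by
  refine Summable.of_nonneg_of_le (fun x => abs_nonneg _) (fun x => ?_)
    ((ha.add hb).mul_left (1/2))
  have := abs_mul_le (a x) (b x) 1 one_pos
  simpa using this.trans (by nlinarith [sq_nonneg (a x), sq_nonneg (b x)])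

set_option maxHeartbeats 1000000 in
lemma tail_est {ι : Type*} (h g : ι → ℝ) (s : Finset ι) (t : ℝ) (ht : 0 < t)
    (hhsq : Summable fun x => (h x)^2) (hg : Summable fun x => (g x)^2)
    (habs : Summable fun x => |h x * g x|) :
    |∑' x : ↑(↑s : Set ι)ᶜ, h x * g x| ≤
      1/(2*t) * ∑' x, (h x)^2 + t/2 * (∑' x : {x // x ∉ s}, (g x)^2) := by
  have hsub1 : Summable fun x : ↑(↑s : Set ι)ᶜ => |h x * g x| := habs.subtype _
  have hA : Summable fun x : ↑(↑s : Set ι)ᶜ => 1/(2*t) * (h x)^2 :=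
    (hhsq.subtype _).mul_left (1/(2*t))
  have hB : Summable fun x : ↑(↑s : Set ι)ᶜ => t/2 * (g x)^2 :=
    (hg.subtype _).mul_left (t/2)
  have hsub2 : Summable fun x : ↑(↑s : Set ι)ᶜ => 1/(2*t) * (h x)^2 + t/2 * (g x)^2 :=
    hA.add hB
  calc |∑' x : ↑(↑s : Set ι)ᶜ, h x * g x|
      ≤ ∑' x : ↑(↑s : Set ι)ᶜ, |h x * g x| := by
        have := norm_tsum_le_tsum_norm (f := fun x : ↑(↑s : Set ι)ᶜ => h x * g x)
          (by simpa only [Real.norm_eq_abs] using hsub1)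
        simpa only [Real.norm_eq_abs] using this
    _ ≤ ∑' x : ↑(↑s : Set ι)ᶜ, (1/(2*t) * (h x)^2 + t/2 * (g x)^2) :=
        Summable.tsum_le_tsum (fun x => abs_mul_le _ _ t ht) hsub1 hsub2
    _ = 1/(2*t) * ∑' x : ↑(↑s : Set ι)ᶜ, (h x)^2
          + t/2 * ∑' x : ↑(↑s : Set ι)ᶜ, (g x)^2 := by
        rw [Summable.tsum_add hA hB, tsum_mul_left, tsum_mul_left]
    _ ≤ 1/(2*t) * ∑' x, (h x)^2 + t/2 * (∑' x : {x // x ∉ s}, (g x)^2) := by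
        have hle : ∑' x : ↑(↑s : Set ι)ᶜ, (h ↑x)^2 ≤ ∑' x, (h x)^2 :=
          Summable.tsum_subtype_le (fun x => (h x)^2) ((↑s : Set ι)ᶜ) (fun x => sq_nonneg _) hhsq
        have heq : (∑' x : ↑(↑s : Set ι)ᶜ, (g ↑x)^2) = ∑' x : {x // x ∉ s}, (g x)^2 := rfl
        rw [heq]
        have := mul_le_mul_of_nonneg_left hle (by positivity : (0:ℝ) ≤ 1/(2*t))
        linarith

set_option maxHeartbeats 1000000 in
/-- The key weak-convergence lemma: a sequence bounded in `ℓ²` converging pointwise to `g`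
pairs against `g` in the limit as `‖g‖²`. -/
lemma weak {ι : Type*} (C : ℝ) (f : ℕ → ι → ℝ) (g : ι → ℝ)
    (hf : ∀ n, Summable fun x => (f n x)^2) (hbd : ∀ n, ∑' x, (f n x)^2 ≤ C)
    (hg : Summable fun x => (g x)^2) (hgC : ∑' x, (g x)^2 ≤ C)
    (hptw : ∀ x, Tendsto (fun n => f n x) atTop (nhds (g x))) :
    Tendsto (fun n => ∑' x, f n x * g x) atTop (nhds (∑' x, (g x)^2)) := by
  classical
  have hC : 0 ≤ C := le_trans (tsum_nonneg fun x => sq_nonneg _) (hbd 0)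
  set h : ℕ → ι → ℝ := fun n x => f n x - g x with hh
  have hhsq : ∀ n, Summable fun x => (h n x)^2 := by
    intro n
    refine Summable.of_nonneg_of_le (fun x => sq_nonneg _) (fun x => ?_)
      (((hf n).mul_left 2).add (hg.mul_left 2))
    simp only [hh]
    nlinarith [sq_nonneg (f n x + g x)]
  have hhbd : ∀ n, ∑' x, (h n x)^2 ≤ 4 * C := by
    intro n
    calc ∑' x, (h n x)^2 ≤ ∑' x, (2 * (f n x)^2 + 2 * (g x)^2) := by
          refine Summable.tsum_le_tsum (fun x => ?_) (hhsq n) (((hf n).mul_left 2).add (hg.mul_left 2))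
          simp only [hh]; nlinarith [sq_nonneg (f n x + g x)]
      _ = 2 * ∑' x, (f n x)^2 + 2 * ∑' x, (g x)^2 := by
          rw [Summable.tsum_add ((hf n).mul_left 2) (hg.mul_left 2), tsum_mul_left, tsum_mul_left]
      _ ≤ 4 * C := by linarith [hbd n, hgC]
  have hhg : ∀ n, Summable fun x => h n x * g x :=
    fun n => (summable_mul (h n) g (hhsq n) hg).of_abs
  have hfg : ∀ n, Summable fun x => f n x * g x := by
    intro n
    have : (fun x => f n x * g x) = fun x => h n x * g x + (g x)^2 := by
      funext x; simp only [hh]; ring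
    rw [this]; exact (hhg n).add hg
  have hdist : ∀ n, ∑' x, f n x * g x - ∑' x, (g x)^2 = ∑' x, h n x * g x := by
    intro n
    have : (fun x => f n x * g x) = fun x => h n x * g x + (g x)^2 := by
      funext x; simp only [hh]; ring
    rw [this, Summable.tsum_add (hhg n) hg]; ring
  rw [Metric.tendsto_atTop]
  intro ε hε
  set t : ℝ := 6 * (C + 1) / ε with ht
  have htpos : 0 < t := by positivity
  have hδ : (0:ℝ) < ε / (3 * t) := by positivity
  obtain ⟨s, hs⟩ :=
    ((tendsto_tsum_compl_atTop_zero (fun x => (g x)^2)).eventually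
      (gt_mem_nhds hδ)).exists
  -- finite part tends to 0
  have hfin : Tendsto (fun n => ∑ x ∈ s, h n x * g x) atTop (nhds 0) := by
    have := tendsto_finset_sum (f := fun x n => h n x * g x) s
      (fun x _ => (((hptw x).sub tendsto_const_nhds).mul_const (g x)))
    simpa using this
  obtain ⟨N, hN⟩ := Metric.tendsto_atTop.1 hfin (ε/3) (by positivity)
  refine ⟨N, fun n hn => ?_⟩
  rw [Real.dist_eq, hdist n]
  have hdecomp := Summable.sum_add_tsum_compl (s := s) (hhg n)
  -- tail estimate
  have htail : |∑' x : ↑(↑s : Set ι)ᶜ, h n x * g x| ≤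
      1/(2*t) * ∑' x, (h n x)^2 + t/2 * (∑' x : {x // x ∉ s}, (g x)^2) :=
    tail_est (h n) g s t htpos (hhsq n) hg (summable_mul (h n) g (hhsq n) hg)
  have hb1 : 1/(2*t) * ∑' x, (h n x)^2 ≤ ε/3 := by
    have h4 : ∑' x, (h n x)^2 ≤ 4*C := hhbd n
    have h5 : 1/(2*t) * ∑' x, (h n x)^2 ≤ 1/(2*t) * (4*C) := by
      have : 0 ≤ 1/(2*t) := by positivity
      exact mul_le_mul_of_nonneg_left h4 this
    refine h5.trans ?_
    rw [ht]
    have hC1 : (0:ℝ) < C + 1 := by linarith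
    have he : 1 / (2 * (6*(C+1)/ε)) * (4*C) = (C*ε)/(3*(C+1)) := by
      field_simp; ring
    rw [he, div_le_div_iff₀ (by positivity) (by norm_num)]
    nlinarith
  have hb2 : t/2 * (∑' x : {x // x ∉ s}, (g x)^2) ≤ ε/6 := by
    have : t/2 * (∑' x : {x // x ∉ s}, (g x)^2) ≤ t/2 * (ε/(3*t)) := by
      exact mul_le_mul_of_nonneg_left hs.le (by positivity)
    refine this.trans (le_of_eq ?_)
    field_simp
    ring
  have habs : |∑' x, h n x * g x| < ε := by
    rw [← hdecomp]
    have h1 : |∑ x ∈ s, h n x * g x| < ε/3 := by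
      have := hN n hn
      rwa [Real.dist_eq, sub_zero] at this
    calc |∑ x ∈ s, h n x * g x + ∑' x : ↑(↑s : Set ι)ᶜ, h n x * g x|
        ≤ |∑ x ∈ s, h n x * g x| + |∑' x : ↑(↑s : Set ι)ᶜ, h n x * g x| := abs_add_le _ _
      _ < ε/3 + (ε/3 + ε/6) := by
          have := htail.trans (add_le_add hb1 hb2)
          linarith
      _ < ε := by linarith
  exact habs

lemma per_fiber {ι : Type*} (a b : ι → ℝ) (ha : Summable fun x => (a x)^2)
    (hb : Summable fun x => (b x)^2) :
    (1/2) * ∑' x, (a x)^2 - (1/2) * ∑' x, (a x - b x)^2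
      = ∑' x, a x * b x - (1/2) * ∑' x, (b x)^2 := by
  have hab : Summable fun x => a x * b x := (summable_mul a b ha hb).of_abs
  have hamb : Summable fun x => (a x - b x)^2 := by
    have : (fun x => (a x - b x)^2) = fun x => (a x)^2 - 2*(a x * b x) + (b x)^2 := by
      funext x; ring
    rw [this]; exact (ha.sub (hab.mul_left 2)).add hb
  have h1 : ∑' x, (a x)^2 - ∑' x, (a x - b x)^2 = ∑' x, ((a x)^2 - (a x - b x)^2) :=
    (Summable.tsum_sub ha hamb).symm
  have h2 : ∑' x, ((a x)^2 - (a x - b x)^2) = 2 * ∑' x, (a x * b x) - ∑' x, (b x)^2 := by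
    have e : (fun x => (a x)^2 - (a x - b x)^2) = fun x => 2*(a x * b x) - (b x)^2 := by
      funext x; ring
    rw [e, Summable.tsum_sub (hab.mul_left 2) hb, tsum_mul_left]
  linarith [h1, h2]

end BLAux

open BLAux in
/-- Brezis-Lieb identity for the discrete Dirichlet energy: if `(u_n)` is bounded
in `ℓ^2(ℤ^d)` and converges pointwise to `u`, then
`‖∇u_n‖_2^2 − ‖∇(u_n − u)‖_2^2 → ‖∇u‖_2^2`. -/
theorem stmt_4 (d : ℕ) (u : ℕ → (Fin d → ℤ) → ℝ) (v : (Fin d → ℤ) → ℝ)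
    (hsum : ∀ n, Summable fun x => (u n x) ^ 2)
    (hbd : ∃ C : ℝ, ∀ n, ∑' x, (u n x) ^ 2 ≤ C)
    (hptw : ∀ x, Tendsto (fun n => u n x) atTop (nhds (v x))) :
    Tendsto
      (fun n => (∑' x, gradSq d (u n) x) - ∑' x, gradSq d (fun y => u n y - v y) x)
      atTop (nhds (∑' x, gradSq d v x)) := by
  classical
  obtain ⟨C, hC⟩ := hbd
  have hC0 : 0 ≤ C := le_trans (tsum_nonneg fun x => sq_nonneg _) (hC 0)
  -- v is in ℓ²
  have hvbound : ∀ s : Finset (Fin d → ℤ), ∑ x ∈ s, (v x)^2 ≤ C := by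
    intro s
    have hlim : Tendsto (fun n => ∑ x ∈ s, (u n x)^2) atTop (nhds (∑ x ∈ s, (v x)^2)) :=
      tendsto_finset_sum s (fun x _ => ((hptw x).pow 2))
    exact le_of_tendsto hlim (Eventually.of_forall fun n =>
      le_trans (Summable.sum_le_tsum s (fun x _ => sq_nonneg _) (hsum n)) (hC n))
  have hv : Summable fun x => (v x)^2 :=
    summable_of_sum_le (fun x => sq_nonneg _) hvbound
  have hvC : ∑' x, (v x)^2 ≤ C := Summable.tsum_le_of_sum_le hv hvbound
  -- difference in ℓ²
  have hsub : ∀ n, Summable fun x => (u n x - v x)^2 := by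
    intro n
    refine Summable.of_nonneg_of_le (fun x => sq_nonneg _) (fun x => ?_)
      (((hsum n).mul_left 2).add (hv.mul_left 2))
    nlinarith [sq_nonneg (u n x + v x)]
  -- weak convergence per fiber
  have key : ∀ q : Fin d × Bool,
      Tendsto (fun n => ∑' x, fib d (u n) q x * fib d v q x) atTop
        (nhds (∑' x, (fib d v q x)^2)) := by
    intro q
    refine weak (4*C) (fun n => fib d (u n) q) (fib d v q)
      (fun n => summable_fib_sq (u n) (hsum n) q)
      (fun n => (tsum_fib_sq_le (u n) (hsum n) q).trans (by nlinarith [hC n]))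
      (summable_fib_sq v hv q)
      ((tsum_fib_sq_le v hv q).trans (by nlinarith))
      (fun x => ?_)
    exact (hptw _).sub (hptw _)
  -- rewrite the sequence
  have hfun : ∀ n, (∑' x, gradSq d (u n) x) - ∑' x, gradSq d (fun y => u n y - v y) x
      = ∑ q : Fin d × Bool,
          (∑' x, fib d (u n) q x * fib d v q x - (1/2) * ∑' x, (fib d v q x)^2) := by
    intro n
    rw [tsum_gradSq (u n) (hsum n), tsum_gradSq _ (hsub n)]
    have e1 : ∀ q : Fin d × Bool,
        ∑' x, (fib d (fun y => u n y - v y) q x)^2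
          = ∑' x, (fib d (u n) q x - fib d v q x)^2 :=
      fun q => tsum_congr fun x => by rw [fib_sub]
    rw [Finset.sum_congr rfl (fun q _ => e1 q)]
    rw [Finset.mul_sum, Finset.mul_sum, ← Finset.sum_sub_distrib]
    refine Finset.sum_congr rfl fun q _ => ?_
    exact per_fiber (fib d (u n) q) (fib d v q)
      (summable_fib_sq (u n) (hsum n) q) (summable_fib_sq v hv q)
  -- assemble
  have hlim : Tendsto
      (fun n => ∑ q : Fin d × Bool,
        (∑' x, fib d (u n) q x * fib d v q x - (1/2) * ∑' x, (fib d v q x)^2))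
      atTop
      (nhds (∑ q : Fin d × Bool,
        (∑' x, (fib d v q x)^2 - (1/2) * ∑' x, (fib d v q x)^2))) :=
    tendsto_finset_sum _ (fun q _ => (key q).sub_const _)
  have hfinal : ∑ q : Fin d × Bool,
      (∑' x, (fib d v q x)^2 - (1/2) * ∑' x, (fib d v q x)^2)
      = ∑' x, gradSq d v x := by
    rw [tsum_gradSq v hv, Finset.sum_sub_distrib, ← Finset.mul_sum]
    ring
  rw [← hfinal]
  exact Tendsto.congr (fun n => (hfun n).symm) hlim
end

section
/- Suppose V : ℤ^d → ℝ is bounded and V(x) → 0 as |x| → ∞. If (u_n) ⊂ ℓ^2(ℤ^d) is bounded and converges pointwise to u, then lim_{n→∞} (∑_x V(x)u_n(x)^2 − ∑_x V(x)(u_n(x)−u(x))^2) = ∑_x V(x)u(x)^2. -/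
open Filter

private lemma abs3_le {a b c M : ℝ} (hM : |a| ≤ M) : |a * b * c| ≤ M / 2 * (b ^ 2 + c ^ 2) := by
  have h1 : |a * b * c| = |a| * (|b| * |c|) := by rw [abs_mul, abs_mul, mul_assoc]
  nlinarith [abs_nonneg a, abs_nonneg b, abs_nonneg c, sq_nonneg (|b| - |c|), sq_abs b, sq_abs c,
    mul_le_mul_of_nonneg_right hM (mul_nonneg (abs_nonneg b) (abs_nonneg c))]

private lemma summable_of_abs_le {ι : Type*} {f g : ι → ℝ} (hg : Summable g)
    (h : ∀ x, |f x| ≤ g x) : Summable f :=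
  summable_abs_iff.mp (Summable.of_nonneg_of_le (fun x => abs_nonneg _) h hg)

/-- Brezis–Lieb type splitting for the potential term: if `V : ℤ^d → ℝ` is bounded
with `V(x) → 0` as `|x| → ∞`, and `(u_n) ⊂ ℓ^2(ℤ^d)` is bounded and converges
pointwise to `u`, then
`∑_x V(x)u_n(x)^2 − ∑_x V(x)(u_n(x) − u(x))^2 → ∑_x V(x)u(x)^2`. -/
theorem stmt_14 (d : ℕ) (V : (Fin d → ℤ) → ℝ)
    (hVb : ∃ M : ℝ, ∀ x, |V x| ≤ M)
    (hV0 : Tendsto V cofinite (nhds 0))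
    (u : ℕ → (Fin d → ℤ) → ℝ) (v : (Fin d → ℤ) → ℝ)
    (hsum : ∀ n, Summable fun x => u n x ^ 2)
    (hbd : ∃ B : ℝ, ∀ n, ∑' x, u n x ^ 2 ≤ B)
    (hptw : ∀ x, Tendsto (fun n => u n x) atTop (nhds (v x))) :
    Tendsto
      (fun n => (∑' x, V x * u n x ^ 2) - ∑' x, V x * (u n x - v x) ^ 2)
      atTop (nhds (∑' x, V x * v x ^ 2)) := by
  obtain ⟨M, hM⟩ := hVb
  obtain ⟨B, hB⟩ := hbd
  have hB0 : 0 ≤ B := le_trans (tsum_nonneg fun x => sq_nonneg _) (hB 0)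
  -- v is ℓ²
  have hvsum : Summable fun x => v x ^ 2 := by
    apply summable_of_sum_le (c := B) (fun x => sq_nonneg _)
    intro s
    have h1 : Tendsto (fun n => ∑ x ∈ s, u n x ^ 2) atTop (nhds (∑ x ∈ s, v x ^ 2)) :=
      tendsto_finset_sum _ fun x _ => (hptw x).pow 2
    refine le_of_tendsto h1 (Eventually.of_forall fun n => ?_)
    exact le_trans (Summable.sum_le_tsum s (fun x _ => sq_nonneg _) (hsum n)) (hB n)
  have hv_le : ∑' x, v x ^ 2 ≤ B := by
    refine Summable.tsum_le_of_sum_le hvsum fun s => ?_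
    have h1 : Tendsto (fun n => ∑ x ∈ s, u n x ^ 2) atTop (nhds (∑ x ∈ s, v x ^ 2)) :=
      tendsto_finset_sum _ fun x _ => (hptw x).pow 2
    refine le_of_tendsto h1 (Eventually.of_forall fun n => ?_)
    exact le_trans (Summable.sum_le_tsum s (fun x _ => sq_nonneg _) (hsum n)) (hB n)
  -- summability facts
  have hwsum : ∀ n, Summable fun x => (u n x - v x) ^ 2 := by
    intro n
    refine Summable.of_nonneg_of_le (fun x => sq_nonneg _) (fun x => ?_)
      (((hsum n).mul_left 2).add (hvsum.mul_left 2))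
    nlinarith [sq_nonneg (u n x + v x)]
  have hw_le : ∀ n, ∑' x, (u n x - v x) ^ 2 ≤ 4 * B := by
    intro n
    calc ∑' x, (u n x - v x) ^ 2
        ≤ ∑' x, (2 * u n x ^ 2 + 2 * v x ^ 2) :=
          Summable.tsum_le_tsum (fun x => by nlinarith [sq_nonneg (u n x + v x)]) (hwsum n)
            (((hsum n).mul_left 2).add (hvsum.mul_left 2))
      _ = 2 * (∑' x, u n x ^ 2) + 2 * ∑' x, v x ^ 2 := by
          rw [Summable.tsum_add ((hsum n).mul_left 2) (hvsum.mul_left 2), tsum_mul_left, tsum_mul_left]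
      _ ≤ 4 * B := by have := hB n; linarith
  have hVu : ∀ n, Summable fun x => V x * u n x ^ 2 := by
    intro n
    refine summable_of_abs_le ((hsum n).mul_left M) fun x => ?_
    rw [abs_mul, abs_of_nonneg (sq_nonneg (u n x))]
    exact mul_le_mul_of_nonneg_right (hM x) (sq_nonneg _)
  have hVw : ∀ n, Summable fun x => V x * (u n x - v x) ^ 2 := by
    intro n
    refine summable_of_abs_le ((hwsum n).mul_left M) fun x => ?_
    rw [abs_mul, abs_of_nonneg (sq_nonneg (u n x - v x))]
    exact mul_le_mul_of_nonneg_right (hM x) (sq_nonneg _)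
  have hVv : Summable fun x => V x * v x ^ 2 := by
    refine summable_of_abs_le (hvsum.mul_left M) fun x => ?_
    rw [abs_mul, abs_of_nonneg (sq_nonneg (v x))]
    exact mul_le_mul_of_nonneg_right (hM x) (sq_nonneg _)
  set g : ℕ → (Fin d → ℤ) → ℝ := fun n x => V x * v x * (u n x - v x) with hgdef
  have hg : ∀ n, Summable (g n) := by
    intro n
    exact summable_of_abs_le ((hvsum.add (hwsum n)).mul_left (M / 2))
      fun x => abs3_le (hM x)
  have habs : ∀ n, Summable fun x => |g n x| := fun n => summable_abs_iff.mpr (hg n)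
  -- decomposition of the difference
  have key : ∀ n, (∑' x, V x * u n x ^ 2) - (∑' x, V x * (u n x - v x) ^ 2)
      = (∑' x, V x * v x ^ 2) + 2 * ∑' x, g n x := by
    intro n
    rw [← Summable.tsum_sub (hVu n) (hVw n), ← tsum_mul_left, ← Summable.tsum_add hVv ((hg n).mul_left 2)]
    refine tsum_congr fun x => ?_
    simp only [hgdef]; ring
  -- the cross term tends to 0
  have htend : Tendsto (fun n => ∑' x, g n x) atTop (nhds 0) := by
    rw [Metric.tendsto_atTop]
    intro ε hε
    set δ : ℝ := ε / (5 * B + 1) with hδdef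
    have hδ : 0 < δ := div_pos hε (by linarith)
    have h1 : ∀ᶠ x in cofinite, |V x| < δ := by
      have := Metric.tendsto_nhds.mp hV0 δ hδ
      simpa [Real.dist_eq] using this
    have hfin : {x | ¬ |V x| < δ}.Finite := eventually_cofinite.mp h1
    set F : Finset (Fin d → ℤ) := hfin.toFinset with hFdef
    have hFc : ∀ x, x ∉ F → |V x| < δ := by
      intro x hx
      by_contra h
      exact hx (hfin.mem_toFinset.mpr h)
    -- finite part tends to 0
    have hFt : Tendsto (fun n => ∑ x ∈ F, |g n x|) atTop (nhds 0) := by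
      have h2 : ∀ x ∈ F, Tendsto (fun n => |g n x|) atTop (nhds 0) := by
        intro x _
        have h3 : Tendsto (fun n => g n x) atTop (nhds 0) := by
          have := (tendsto_const_nhds (x := V x * v x) (f := atTop)).mul
            ((hptw x).sub (tendsto_const_nhds (x := v x)))
          simpa [hgdef] using this
        have := h3.abs
        simpa using this
      have := tendsto_finset_sum F h2
      simpa using this
    obtain ⟨N, hN⟩ := (Metric.tendsto_atTop.mp hFt) (ε / 2) (by linarith)
    refine ⟨N, fun n hn => ?_⟩
    have hNn := hN n hn
    rw [Real.dist_eq, sub_zero] at hNn ⊢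
    have hFabs : |∑ x ∈ F, (|g n x|)| = ∑ x ∈ F, |g n x| :=
      abs_of_nonneg (Finset.sum_nonneg fun x _ => abs_nonneg _)
    rw [hFabs] at hNn
    -- tail bound
    have ht1 : (∑' x : {x // x ∉ F}, |g n x|)
        ≤ ∑' x : {x // x ∉ F}, δ / 2 * (v (x : Fin d → ℤ) ^ 2 + (u n x - v x) ^ 2) := by
      refine Summable.tsum_le_tsum (fun x => abs3_le (le_of_lt (hFc x x.2)))
        ((habs n).subtype _) (((hvsum.add (hwsum n)).mul_left (δ / 2)).subtype _)
    have ht2 : (∑' x : {x // x ∉ F}, δ / 2 * (v (x : Fin d → ℤ) ^ 2 + (u n x - v x) ^ 2))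
        ≤ ∑' x, δ / 2 * (v x ^ 2 + (u n x - v x) ^ 2) :=
      Summable.tsum_subtype_le _ _ (fun x => by positivity)
        ((hvsum.add (hwsum n)).mul_left (δ / 2))
    have ht3 : (∑' x, δ / 2 * (v x ^ 2 + (u n x - v x) ^ 2))
        = δ / 2 * ((∑' x, v x ^ 2) + ∑' x, (u n x - v x) ^ 2) := by
      rw [tsum_mul_left, Summable.tsum_add hvsum (hwsum n)]
    have ht4 : δ / 2 * ((∑' x, v x ^ 2) + ∑' x, (u n x - v x) ^ 2) ≤ δ / 2 * (5 * B) := by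
      refine mul_le_mul_of_nonneg_left ?_ (by positivity)
      have := hw_le n
      linarith
    have htail : (∑' x : {x // x ∉ F}, |g n x|) ≤ δ / 2 * (5 * B) := by
      calc (∑' x : {x // x ∉ F}, |g n x|) ≤ _ := ht1
        _ ≤ _ := ht2
        _ = _ := ht3
        _ ≤ _ := ht4
    -- combine
    have hsplit : (∑ x ∈ F, |g n x|) + (∑' x : {x // x ∉ F}, |g n x|)
        = ∑' x, |g n x| := Summable.sum_add_tsum_subtype_compl (habs n) F
    have habs_le : |∑' x, g n x| ≤ ∑' x, |g n x| := by
      have := norm_tsum_le_tsum_norm (f := g n) (by simpa [Real.norm_eq_abs] using habs n)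
      simpa [Real.norm_eq_abs] using this
    have hδB : δ / 2 * (5 * B) < ε / 2 := by
      have h5 : δ * (5 * B + 1) = ε := by
        rw [hδdef]; exact div_mul_cancel₀ ε (by linarith)
      nlinarith
    calc |∑' x, g n x| ≤ ∑' x, |g n x| := habs_le
      _ = (∑ x ∈ F, |g n x|) + (∑' x : {x // x ∉ F}, |g n x|) := hsplit.symm
      _ < ε / 2 + ε / 2 := by
          have := htail
          exact add_lt_add_of_lt_of_le hNn (le_trans this (le_of_lt hδB))
      _ = ε := by ring
  -- conclude
  have hfinal : Tendsto (fun n => (∑' x, V x * v x ^ 2) + 2 * ∑' x, g n x) atTop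
      (nhds ((∑' x, V x * v x ^ 2) + 2 * 0)) :=
    tendsto_const_nhds.add (htend.const_mul 2)
  rw [mul_zero, add_zero] at hfinal
  refine hfinal.congr fun n => ?_
  exact (key n).symm
end

section
/- Under the setting of the previous item (Φ, E_a as defined, F strictly superlinear in the sense F(x,√θ s) > θF(x,s) for θ > 1, s ≠ 0), if additionally E_a ≤ 0 for all a > 0, then the map a ↦ E_a is nonincreasing on (0,∞), and it satisfies the subadditivity E_{a+b} ≤ E_a + E_b for all a, b > 0. -/
open Filter

/-- The energy functional
`Φ(u) = (1/2)∑_x (|∇u|^2(x) + V(x)u(x)^2) − ∑_x F(x, u(x))`. -/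
noncomputable def Phi (d : ℕ) (V : (Fin d → ℤ) → ℝ) (F : (Fin d → ℤ) → ℝ → ℝ)
    (u : (Fin d → ℤ) → ℝ) : ℝ :=
  (1 / 2) * (∑' x, (gradSq d u x + V x * u x ^ 2)) - ∑' x, F x (u x)

/-- The set of values of `Φ` on the sphere `‖u‖_2^2 = a` in `ℓ^2(ℤ^d)`. -/
def PhiVals (d : ℕ) (V : (Fin d → ℤ) → ℝ) (F : (Fin d → ℤ) → ℝ → ℝ) (a : ℝ) :
    Set ℝ :=
  {c | ∃ u : (Fin d → ℤ) → ℝ,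
    (Summable fun x => u x ^ 2) ∧ (∑' x, u x ^ 2) = a ∧ Phi d V F u = c}

/-- `E_a = inf {Φ(u) : ‖u‖_2^2 = a}`. -/
noncomputable def En (d : ℕ) (V : (Fin d → ℤ) → ℝ) (F : (Fin d → ℤ) → ℝ → ℝ)
    (a : ℝ) : ℝ :=
  sInf (PhiVals d V F a)

-- Summability of the nonlinear part
lemma summable_F_aux (d : ℕ) (q : ℝ) (hq : 1 < q) (F : (Fin d → ℤ) → ℝ → ℝ)
    (hgrow : ∀ ε : ℝ, 0 < ε → ∃ C : ℝ, ∀ x s, |F x s| ≤ ε * s ^ 2 + C * |s| ^ (q + 1))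
    (u : (Fin d → ℤ) → ℝ) (hu : Summable fun x => u x ^ 2) :
    Summable fun x => F x (u x) := by
  obtain ⟨C, hC⟩ := hgrow 1 one_pos
  apply Summable.of_norm_bounded_eventually (g := fun x => (1 + |C|) * u x ^ 2) (hu.mul_left _)
  have h0 : Tendsto (fun x => u x ^ 2) cofinite (nhds 0) := hu.tendsto_cofinite_zero
  filter_upwards [h0.eventually (gt_mem_nhds one_pos)] with x hx
  have h1 : |u x| ≤ 1 := le_of_lt ((sq_lt_one_iff_abs_lt_one _).mp hx)
  have h2 : |u x| ^ (q + 1) ≤ u x ^ 2 := by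
    rcases eq_or_ne (u x) 0 with h | h
    · rw [h]; simp [Real.zero_rpow (by linarith : q + 1 ≠ 0)]
    · have hpos : 0 < |u x| := abs_pos.mpr h
      calc |u x| ^ (q + 1) ≤ |u x| ^ (2 : ℝ) :=
            Real.rpow_le_rpow_of_exponent_ge hpos h1 (by linarith)
        _ = u x ^ 2 := by rw [Real.rpow_two, sq_abs]
  have h3 : ‖F x (u x)‖ = |F x (u x)| := rfl
  rw [h3]
  calc |F x (u x)| ≤ 1 * u x ^ 2 + C * |u x| ^ (q + 1) := hC x (u x)
    _ ≤ 1 * u x ^ 2 + |C| * (u x ^ 2) := by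
        have hb1 : C * |u x| ^ (q + 1) ≤ |C| * |u x| ^ (q + 1) :=
          mul_le_mul_of_nonneg_right (le_abs_self C) (by positivity)
        have hb2 : |C| * |u x| ^ (q + 1) ≤ |C| * (u x ^ 2) :=
          mul_le_mul_of_nonneg_left h2 (abs_nonneg C)
        linarith
    _ = (1 + |C|) * u x ^ 2 := by ring

lemma phi_scale (d : ℕ) (q : ℝ) (hq : 1 < q) (V : (Fin d → ℤ) → ℝ)
    (F : (Fin d → ℤ) → ℝ → ℝ) (hF0 : ∀ x, F x 0 = 0)
    (hgrow : ∀ ε : ℝ, 0 < ε → ∃ C : ℝ, ∀ x s, |F x s| ≤ ε * s ^ 2 + C * |s| ^ (q + 1))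
    (hsuper : ∀ θ : ℝ, 1 < θ → ∀ s : ℝ, s ≠ 0 → ∀ x,
      θ * F x s < F x (Real.sqrt θ * s))
    (θ : ℝ) (hθ : 1 < θ) (u : (Fin d → ℤ) → ℝ) (hu : Summable fun x => u x ^ 2) :
    Phi d V F (fun x => Real.sqrt θ * u x) ≤ θ * Phi d V F u := by
  set s := Real.sqrt θ with hs
  have hθ0 : (0:ℝ) ≤ θ := by linarith
  have hs2 : s ^ 2 = θ := Real.sq_sqrt hθ0
  set v : (Fin d → ℤ) → ℝ := fun x => s * u x with hv
  have hsq : ∀ a b : ℝ, (s * a - s * b) ^ 2 = θ * (a - b) ^ 2 := by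
    intro a b; rw [← mul_sub, mul_pow, hs2]
  have hgrad : ∀ x, gradSq d v x = θ * gradSq d u x := by
    intro x
    have key : ∑ i : Fin d, ((v (x + latticeE d i) - v x) ^ 2 + (v (x - latticeE d i) - v x) ^ 2)
        = θ * ∑ i : Fin d, ((u (x + latticeE d i) - u x) ^ 2 + (u (x - latticeE d i) - u x) ^ 2) := by
      rw [Finset.mul_sum]
      apply Finset.sum_congr rfl
      intro i _
      simp only [hv]
      rw [hsq, hsq]; ring
    unfold gradSq
    rw [key]; ring
  have hvsq : ∀ x, v x ^ 2 = θ * u x ^ 2 := by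
    intro x; simp only [hv]; rw [mul_pow, hs2]
  have hQ : (∑' x, (gradSq d v x + V x * v x ^ 2))
      = θ * ∑' x, (gradSq d u x + V x * u x ^ 2) := by
    rw [← tsum_mul_left]
    apply tsum_congr
    intro x
    rw [hgrad, hvsq]; ring
  have hsumv : Summable fun x => v x ^ 2 := by
    have : (fun x => v x ^ 2) = fun x => θ * u x ^ 2 := funext hvsq
    rw [this]; exact hu.mul_left θ
  have hFu : Summable fun x => F x (u x) := summable_F_aux d q hq F hgrow u hu
  have hFv : Summable fun x => F x (v x) := summable_F_aux d q hq F hgrow v hsumv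
  have hterm : ∀ x, θ * F x (u x) ≤ F x (v x) := by
    intro x
    rcases eq_or_ne (u x) 0 with h | h
    · simp only [hv, h, mul_zero, hF0]
      exact le_refl 0
    · exact le_of_lt (hsuper θ hθ (u x) h x)
  have hFle : θ * (∑' x, F x (u x)) ≤ ∑' x, F x (v x) := by
    rw [← tsum_mul_left]
    exact Summable.tsum_le_tsum hterm (hFu.mul_left θ) hFv
  unfold Phi
  rw [hQ]
  have := hFle
  nlinarith [hFle]

lemma phiVals_nonempty (d : ℕ) (V : (Fin d → ℤ) → ℝ) (F : (Fin d → ℤ) → ℝ → ℝ)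
    (a : ℝ) (ha : 0 < a) : (PhiVals d V F a).Nonempty := by
  classical
  set u0 : (Fin d → ℤ) → ℝ := fun x => if x = 0 then Real.sqrt a else 0 with hu0
  have hsq : (fun x => u0 x ^ 2) = fun x => if x = 0 then a else 0 := by
    funext x
    simp only [hu0]
    split
    · exact Real.sq_sqrt ha.le
    · simp
  refine ⟨Phi d V F u0, u0, ?_, ?_, rfl⟩
  · rw [hsq]; exact (hasSum_ite_eq 0 a).summable
  · rw [hsq]; exact tsum_ite_eq (0 : Fin d → ℤ) (fun _ => a)

lemma en_scale (d : ℕ) (q : ℝ) (hq : 1 < q) (V : (Fin d → ℤ) → ℝ)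
    (F : (Fin d → ℤ) → ℝ → ℝ) (hF0 : ∀ x, F x 0 = 0)
    (hgrow : ∀ ε : ℝ, 0 < ε → ∃ C : ℝ, ∀ x s, |F x s| ≤ ε * s ^ 2 + C * |s| ^ (q + 1))
    (hsuper : ∀ θ : ℝ, 1 < θ → ∀ s : ℝ, s ≠ 0 → ∀ x,
      θ * F x s < F x (Real.sqrt θ * s))
    (hbdd : ∀ a : ℝ, 0 < a → BddBelow (PhiVals d V F a))
    (a θ : ℝ) (ha : 0 < a) (hθ : 1 ≤ θ) :
    En d V F (θ * a) ≤ θ * En d V F a := by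
  rcases eq_or_lt_of_le hθ with h | h
  · rw [← h, one_mul, one_mul]
  · have hθpos : (0:ℝ) < θ := by linarith
    rw [← div_le_iff₀' hθpos]
    unfold En
    apply le_csInf (phiVals_nonempty d V F a ha)
    rintro c ⟨u, hu, hsum, hPhi⟩
    set v : (Fin d → ℤ) → ℝ := fun x => Real.sqrt θ * u x with hv
    have hvsq : (fun x => v x ^ 2) = fun x => θ * u x ^ 2 := by
      funext x
      simp only [hv]
      rw [mul_pow, Real.sq_sqrt hθpos.le]
    have hmem : Phi d V F v ∈ PhiVals d V F (θ * a) := by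
      refine ⟨v, ?_, ?_, rfl⟩
      · rw [hvsq]; exact hu.mul_left θ
      · rw [hvsq, tsum_mul_left, hsum]
    have h1 : En d V F (θ * a) ≤ Phi d V F v :=
      csInf_le (hbdd (θ * a) (by positivity)) hmem
    have h2 : Phi d V F v ≤ θ * Phi d V F u :=
      phi_scale d q hq V F hF0 hgrow hsuper θ h u hu
    rw [div_le_iff₀' hθpos, ← hPhi]
    exact h1.trans h2


/-- Under the assumptions of the previous statement, if additionally `E_a ≤ 0` for
all `a > 0`, then `a ↦ E_a` is nonincreasing on `(0,∞)` and subadditive: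
`E_{a+b} ≤ E_a + E_b`. -/
theorem stmt_16 (d : ℕ) (q : ℝ) (hq : 1 < q)
    (V : (Fin d → ℤ) → ℝ) (hVb : ∃ M : ℝ, ∀ x, |V x| ≤ M)
    (F : (Fin d → ℤ) → ℝ → ℝ) (hF0 : ∀ x, F x 0 = 0)
    (hgrow : ∀ ε : ℝ, 0 < ε → ∃ C : ℝ, ∀ x s, |F x s| ≤ ε * s ^ 2 + C * |s| ^ (q + 1))
    (hsuper : ∀ θ : ℝ, 1 < θ → ∀ s : ℝ, s ≠ 0 → ∀ x,
      θ * F x s < F x (Real.sqrt θ * s))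
    (hbdd : ∀ a : ℝ, 0 < a → BddBelow (PhiVals d V F a))
    (hneg : ∀ a : ℝ, 0 < a → En d V F a ≤ 0) :
    (∀ a b : ℝ, 0 < a → a ≤ b → En d V F b ≤ En d V F a) ∧
      (∀ a b : ℝ, 0 < a → 0 < b →
        En d V F (a + b) ≤ En d V F a + En d V F b) := by
  have scale := en_scale d q hq V F hF0 hgrow hsuper hbdd
  constructor
  · intro a b ha hab
    have hb : 0 < b := lt_of_lt_of_le ha hab
    have hθ : 1 ≤ b / a := (one_le_div ha).mpr hab
    have h1 : En d V F (b / a * a) ≤ b / a * En d V F a := scale a (b / a) ha hθ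
    rw [div_mul_cancel₀ _ ha.ne'] at h1
    have h2 : En d V F a ≤ 0 := hneg a ha
    nlinarith
  · have key : ∀ a b : ℝ, 0 < a → 0 < b → b ≤ a →
        En d V F (a + b) ≤ En d V F a + En d V F b := by
      intro a b ha hb hba
      set r := b / a with hr
      have hrpos : 0 < r := div_pos hb ha
      have h1 : En d V F ((1 + r) * a) ≤ (1 + r) * En d V F a :=
        scale a (1 + r) ha (by linarith)
      have hab : (1 + r) * a = a + b := by
        rw [hr, add_mul, one_mul, div_mul_cancel₀ _ ha.ne']
      rw [hab] at h1
      have h2 : En d V F (a / b * b) ≤ a / b * En d V F b :=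
        scale b (a / b) hb ((one_le_div hb).mpr hba)
      rw [div_mul_cancel₀ _ hb.ne'] at h2
      have h3 : r * En d V F a ≤ r * (a / b * En d V F b) :=
        mul_le_mul_of_nonneg_left h2 hrpos.le
      have h4 : r * (a / b) = 1 := by
        rw [hr, div_mul_div_comm, mul_comm b a, div_self (mul_pos ha hb).ne']
      have h5 : r * En d V F a ≤ En d V F b := by
        rw [← mul_assoc, h4, one_mul] at h3; exact h3
      nlinarith
    intro a b ha hb
    rcases le_total b a with h | h
    · exact key a b ha hb h
    · rw [add_comm, add_comm (En d V F a)]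
      exact key b a hb ha h
end

section
/- Define, for a > 0 and n ∈ ℕ, the tent function u_n(x) = c (n − |x|)_+ / n^{d/2+1} on ℤ^d, where c = c(a,n,d) is chosen so that ‖u_n‖_2^2 = a. Then there exists a constant C = C(a,d) with ‖∇u_n‖_2^2 ≤ C n^{−2}, and for every p > 2, ‖u_n‖_p^p ≤ C(a,d) n^{−d(p−2)/2}; in particular ‖u_n‖_∞ → 0 as n → ∞. -/
open Filter

/-- The tent function `u_n(x) = c (n − |x|)_+ / n^{d/2+1}` on `ℤ^d`, where `|x|`
is the `ℓ^1` norm. -/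
noncomputable def tent (d : ℕ) (c : ℝ) (n : ℕ) (x : Fin d → ℤ) : ℝ :=
  c * max ((n : ℝ) - ∑ i : Fin d, |(x i : ℝ)|) 0 / (n : ℝ) ^ ((d : ℝ) / 2 + 1)

namespace Stmt17

/-- ℓ¹ norm -/
noncomputable def sL {d : ℕ} (x : Fin d → ℤ) : ℝ := ∑ i, |(x i : ℝ)|

lemma sL_nonneg {d : ℕ} (x : Fin d → ℤ) : 0 ≤ sL x :=
  Finset.sum_nonneg fun i _ => abs_nonneg _

lemma tent_eq {d : ℕ} (c : ℝ) (n : ℕ) (x : Fin d → ℤ) :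
    tent d c n x = c * max ((n : ℝ) - sL x) 0 / (n : ℝ) ^ ((d : ℝ) / 2 + 1) := rfl

lemma tent_zero {d : ℕ} (c : ℝ) (n : ℕ) (x : Fin d → ℤ) (h : (n : ℝ) ≤ sL x) :
    tent d c n x = 0 := by
  rw [tent_eq, max_eq_right (sub_nonpos.2 h), mul_zero, zero_div]

lemma tent_nonneg {d : ℕ} {c : ℝ} (hc : 0 ≤ c) (n : ℕ) (x : Fin d → ℤ) :
    0 ≤ tent d c n x := by
  rw [tent_eq]
  positivity

/-- the box of radius m -/
noncomputable def BB (d m : ℕ) : Finset (Fin d → ℤ) := Finset.Icc (fun _ => -(m : ℤ)) (fun _ => (m : ℤ))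

lemma sL_lower {d m : ℕ} {x : Fin d → ℤ} (hx : x ∉ BB d m) : (m : ℝ) + 1 ≤ sL x := by
  have h : ¬((fun _ => -(m : ℤ)) ≤ x ∧ x ≤ fun _ => (m : ℤ)) := by
    simpa [BB, Finset.mem_Icc] using hx
  rw [not_and_or] at h
  have h2 : ∃ i, (m : ℤ) + 1 ≤ |x i| := by
    rcases h with h | h
    · rw [Pi.le_def] at h; push_neg at h
      obtain ⟨i, hi⟩ := h
      exact ⟨i, le_trans (by omega) (neg_le_abs _)⟩
    · rw [Pi.le_def] at h; push_neg at h
      obtain ⟨i, hi⟩ := h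
      exact ⟨i, le_trans (by omega) (le_abs_self _)⟩
  obtain ⟨i, hi⟩ := h2
  calc (m : ℝ) + 1 ≤ |(x i : ℝ)| := by
        rw [← Int.cast_abs]; exact_mod_cast hi
    _ ≤ ∑ j, |(x j : ℝ)| := Finset.single_le_sum (fun j _ => abs_nonneg ((x j : ℝ))) (Finset.mem_univ i)
    _ = sL x := rfl

lemma card_BB (d m : ℕ) : (BB d m).card = (2 * m + 1) ^ d := by
  rw [BB, Pi.card_Icc]
  have : ∀ i : Fin d, (Finset.Icc (-(m:ℤ)) (m:ℤ)).card = 2 * m + 1 := by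
    intro i; rw [Int.card_Icc]; omega
  simp only [Int.card_Icc]
  rw [Finset.prod_const]
  congr 1
  · omega
  · simp

lemma sL_neighbor {d : ℕ} (x : Fin d → ℤ) (i : Fin d) (ε : ℤ) (hε : ε = 1 ∨ ε = -1)
    (y : Fin d → ℤ) (hy : ∀ j, y j = x j + if j = i then ε else 0) :
    |sL y - sL x| ≤ 1 := by
  have h1 : sL y - sL x = ∑ j, (|(y j : ℝ)| - |(x j : ℝ)|) := by
    rw [sL, sL, Finset.sum_sub_distrib]
  rw [h1]
  calc |∑ j, (|(y j : ℝ)| - |(x j : ℝ)|)| ≤ ∑ j, |(|(y j : ℝ)| - |(x j : ℝ)|)| :=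
        Finset.abs_sum_le_sum_abs _ _
    _ ≤ ∑ j, |(y j : ℝ) - (x j : ℝ)| :=
        Finset.sum_le_sum fun j _ => abs_abs_sub_abs_le_abs_sub _ _
    _ = ∑ j, (if j = i then (1 : ℝ) else 0) := by
        refine Finset.sum_congr rfl fun j _ => ?_
        rw [hy j]
        by_cases h : j = i
        · rcases hε with h1 | h1 <;> simp [h, h1]
        · simp [h]
    _ = 1 := by simp

lemma tent_lip {d : ℕ} {c : ℝ} (hc : 0 ≤ c) {n : ℕ} (hn : 1 ≤ n)
    (x y : Fin d → ℤ) (h : |sL y - sL x| ≤ 1) :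
    |tent d c n y - tent d c n x| ≤ c / (n : ℝ) ^ ((d : ℝ) / 2 + 1) := by
  have hnR : (0 : ℝ) < n := by exact_mod_cast hn
  have hN : 0 < (n : ℝ) ^ ((d : ℝ) / 2 + 1) := Real.rpow_pos_of_pos hnR _
  have heq : tent d c n y - tent d c n x
      = c * (max ((n : ℝ) - sL y) 0 - max ((n : ℝ) - sL x) 0) / (n : ℝ) ^ ((d : ℝ) / 2 + 1) := by
    rw [tent_eq, tent_eq]; ring
  have hm : |max ((n : ℝ) - sL y) 0 - max ((n : ℝ) - sL x) 0| ≤ 1 := by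
    calc |max ((n : ℝ) - sL y) 0 - max ((n : ℝ) - sL x) 0|
        ≤ |((n : ℝ) - sL y) - ((n : ℝ) - sL x)| := abs_max_sub_max_le_abs _ _ _
      _ = |sL y - sL x| := by rw [abs_sub_comm]; ring_nf
      _ ≤ 1 := h
  rw [heq, abs_div, abs_of_pos hN, abs_mul, abs_of_nonneg hc]
  calc c * |max ((n : ℝ) - sL y) 0 - max ((n : ℝ) - sL x) 0| / (n : ℝ) ^ ((d : ℝ) / 2 + 1)
      ≤ c * 1 / (n : ℝ) ^ ((d : ℝ) / 2 + 1) := by gcongr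
    _ = c / (n : ℝ) ^ ((d : ℝ) / 2 + 1) := by rw [mul_one]

lemma neighbor_plus {d : ℕ} (x : Fin d → ℤ) (i : Fin d) (j : Fin d) :
    (x + latticeE d i) j = x j + if j = i then (1 : ℤ) else 0 := by
  simp [latticeE, Pi.add_apply]

lemma neighbor_minus {d : ℕ} (x : Fin d → ℤ) (i : Fin d) (j : Fin d) :
    (x - latticeE d i) j = x j + if j = i then (-1 : ℤ) else 0 := by
  by_cases h : j = i <;> simp [latticeE, Pi.sub_apply, h, sub_eq_add_neg]

lemma gradSq_le {d : ℕ} {c : ℝ} (hc : 0 ≤ c) {n : ℕ} (hn : 1 ≤ n) (x : Fin d → ℤ) :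
    gradSq d (tent d c n) x ≤ (d : ℝ) * (c / (n : ℝ) ^ ((d : ℝ) / 2 + 1)) ^ 2 := by
  rw [gradSq]
  have key : ∀ i : Fin d,
      (tent d c n (x + latticeE d i) - tent d c n x) ^ 2
        + (tent d c n (x - latticeE d i) - tent d c n x) ^ 2
      ≤ 2 * (c / (n : ℝ) ^ ((d : ℝ) / 2 + 1)) ^ 2 := by
    intro i
    have h1 := tent_lip hc hn x (x + latticeE d i)
      (sL_neighbor x i 1 (Or.inl rfl) _ (neighbor_plus x i))
    have h2 := tent_lip hc hn x (x - latticeE d i)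
      (sL_neighbor x i (-1) (Or.inr rfl) _ (neighbor_minus x i))
    have b1 : (tent d c n (x + latticeE d i) - tent d c n x) ^ 2
        ≤ (c / (n : ℝ) ^ ((d : ℝ) / 2 + 1)) ^ 2 :=
      sq_le_sq' (abs_le.1 h1).1 (abs_le.1 h1).2
    have b2 : (tent d c n (x - latticeE d i) - tent d c n x) ^ 2
        ≤ (c / (n : ℝ) ^ ((d : ℝ) / 2 + 1)) ^ 2 :=
      sq_le_sq' (abs_le.1 h2).1 (abs_le.1 h2).2
    linarith
  calc (1 / 2 : ℝ) * ∑ i : Fin d,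
        ((tent d c n (x + latticeE d i) - tent d c n x) ^ 2
          + (tent d c n (x - latticeE d i) - tent d c n x) ^ 2)
      ≤ (1 / 2 : ℝ) * ∑ _i : Fin d, 2 * (c / (n : ℝ) ^ ((d : ℝ) / 2 + 1)) ^ 2 := by
        gcongr with i _
        exact key i
    _ = (d : ℝ) * (c / (n : ℝ) ^ ((d : ℝ) / 2 + 1)) ^ 2 := by
        rw [Finset.sum_const, Finset.card_univ, Fintype.card_fin, nsmul_eq_mul]; ring

lemma gradSq_zero {d : ℕ} (c : ℝ) (n : ℕ) (x : Fin d → ℤ) (hx : (n : ℝ) + 2 ≤ sL x) :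
    gradSq d (tent d c n) x = 0 := by
  have hx0 : tent d c n x = 0 := tent_zero c n x (by linarith)
  have hnb : ∀ y : Fin d → ℤ, |sL y - sL x| ≤ 1 → tent d c n y = 0 := by
    intro y h
    have := abs_le.1 h
    exact tent_zero c n y (by linarith [this.1])
  rw [gradSq]
  rw [Finset.sum_eq_zero]
  · ring
  · intro i _
    rw [hx0, hnb _ (sL_neighbor x i 1 (Or.inl rfl) _ (neighbor_plus x i)),
      hnb _ (sL_neighbor x i (-1) (Or.inr rfl) _ (neighbor_minus x i))]
    ring

lemma tsum_sq_eq {d : ℕ} (c : ℝ) (n : ℕ) :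
    ∑' x, (tent d c n x) ^ 2 = ∑ x ∈ BB d n, (tent d c n x) ^ 2 :=
  tsum_eq_sum fun x hx => by
    rw [tent_zero c n x (le_trans (by linarith) (sL_lower hx))]; ring

lemma summable_sq {d : ℕ} (c : ℝ) (n : ℕ) : Summable (fun x => (tent d c n x) ^ 2) :=
  summable_of_ne_finset_zero (s := BB d n) fun x hx => by
    rw [tent_zero c n x (le_trans (by linarith) (sL_lower hx))]; ring

lemma hN2 {d n : ℕ} (hn : 1 ≤ n) :
    ((n : ℝ) ^ ((d : ℝ) / 2 + 1)) ^ 2 = (n : ℝ) ^ (d + 2 : ℕ) := by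
  have hnR : (0 : ℝ) ≤ n := by positivity
  rw [← Real.rpow_natCast ((n : ℝ) ^ ((d : ℝ) / 2 + 1)) 2, ← Real.rpow_mul hnR,
    ← Real.rpow_natCast (n : ℝ) (d + 2)]
  congr 1
  push_cast
  ring

lemma csq_le {d : ℕ} (hd : 0 < d) {a : ℝ} {c : ℝ} (hc : 0 < c) {n : ℕ} (hn : 1 ≤ n)
    (hnorm : ∑' x, (tent d c n x) ^ 2 = a) : c ^ 2 ≤ 4 * (2 * (d : ℝ)) ^ d * a := by
  set m := n / (2 * d) with hm
  set T : Finset (Fin d → ℤ) := Finset.Icc 0 (fun _ => (m : ℤ)) with hT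
  have hnR : (0 : ℝ) < n := by exact_mod_cast hn
  have hdR : (0 : ℝ) < d := by exact_mod_cast hd
  have hNpos : (0 : ℝ) < (n : ℝ) ^ ((d : ℝ) / 2 + 1) := Real.rpow_pos_of_pos hnR _
  -- pointwise lower bound on T
  have hpt : ∀ x ∈ T, c ^ 2 * (n : ℝ) ^ 2 / (4 * ((n : ℝ) ^ ((d : ℝ) / 2 + 1)) ^ 2)
      ≤ (tent d c n x) ^ 2 := by
    intro x hxT
    rw [Finset.mem_Icc] at hxT
    have h1 : ∀ j, (0 : ℤ) ≤ x j := hxT.1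
    have h2 : ∀ j, x j ≤ (m : ℤ) := hxT.2
    have hsx : sL x ≤ (n : ℝ) / 2 := by
      have hs1 : sL x ≤ ∑ _j : Fin d, (m : ℝ) := Finset.sum_le_sum fun j _ => by
        rw [abs_of_nonneg (by exact_mod_cast h1 j)]; exact_mod_cast h2 j
      rw [Finset.sum_const, Finset.card_univ, Fintype.card_fin, nsmul_eq_mul] at hs1
      have hdm : 2 * (d * m) ≤ n := by
        calc 2 * (d * m) = n / (2 * d) * (2 * d) := by rw [hm]; ring
          _ ≤ n := Nat.div_mul_le_self _ _
      have hdm' : (2 : ℝ) * ((d : ℝ) * (m : ℝ)) ≤ (n : ℝ) := by exact_mod_cast hdm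
      linarith
    have htent : c * ((n : ℝ) / 2) / ((n : ℝ) ^ ((d : ℝ) / 2 + 1)) ≤ tent d c n x := by
      rw [tent_eq]
      gcongr
      exact le_max_of_le_left (by linarith)
    have h0 : 0 ≤ c * ((n : ℝ) / 2) / ((n : ℝ) ^ ((d : ℝ) / 2 + 1)) := by positivity
    calc c ^ 2 * (n : ℝ) ^ 2 / (4 * ((n : ℝ) ^ ((d : ℝ) / 2 + 1)) ^ 2)
        = (c * ((n : ℝ) / 2) / ((n : ℝ) ^ ((d : ℝ) / 2 + 1))) ^ 2 := by
          field_simp; ring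
      _ ≤ (tent d c n x) ^ 2 := pow_le_pow_left₀ h0 htent 2
  have hsum : (T.card : ℝ) * (c ^ 2 * (n : ℝ) ^ 2 / (4 * ((n : ℝ) ^ ((d : ℝ) / 2 + 1)) ^ 2))
      ≤ ∑ x ∈ T, (tent d c n x) ^ 2 := by
    simpa [nsmul_eq_mul] using Finset.card_nsmul_le_sum T _ _ hpt
  have hle_a : ∑ x ∈ T, (tent d c n x) ^ 2 ≤ a := by
    rw [← hnorm]
    exact Summable.sum_le_tsum T (fun x _ => sq_nonneg _) (summable_sq c n)
  have hcard : (T.card : ℝ) = ((m : ℝ) + 1) ^ d := by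
    have hc1 : T.card = (m + 1) ^ d := by
      rw [hT, Pi.card_Icc]
      simp only [Pi.zero_apply, Int.card_Icc]
      have ht : ((m : ℤ) + 1 - 0).toNat = m + 1 := by
        rw [sub_zero, ← Nat.cast_one, ← Nat.cast_add, Int.toNat_natCast]
      rw [ht, Finset.prod_const, Finset.card_univ, Fintype.card_fin]
    rw [hc1]
    push_cast
    ring
  have h2d : (0 : ℝ) < 2 * (d : ℝ) := by linarith
  have hm1 : (n : ℝ) / (2 * (d : ℝ)) ≤ (m : ℝ) + 1 := by
    have hmod := Nat.div_add_mod n (2 * d)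
    have hlt : n % (2 * d) < 2 * d := Nat.mod_lt n (by omega)
    have haux : 2 * d * (m + 1) = 2 * d * (n / (2 * d)) + 2 * d := by rw [hm]; ring
    have : n < 2 * d * (m + 1) := by omega
    have hR : (n : ℝ) < 2 * (d : ℝ) * ((m : ℝ) + 1) := by exact_mod_cast this
    rw [div_le_iff₀ h2d]
    linarith
  have hpow : ((n : ℝ) / (2 * (d : ℝ))) ^ d ≤ ((m : ℝ) + 1) ^ d :=
    pow_le_pow_left₀ (by positivity) hm1 d
  have key : ((n : ℝ) / (2 * (d : ℝ))) ^ d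
      * (c ^ 2 * (n : ℝ) ^ 2 / (4 * ((n : ℝ) ^ ((d : ℝ) / 2 + 1)) ^ 2)) ≤ a := by
    calc ((n : ℝ) / (2 * (d : ℝ))) ^ d
          * (c ^ 2 * (n : ℝ) ^ 2 / (4 * ((n : ℝ) ^ ((d : ℝ) / 2 + 1)) ^ 2))
        ≤ ((m : ℝ) + 1) ^ d
          * (c ^ 2 * (n : ℝ) ^ 2 / (4 * ((n : ℝ) ^ ((d : ℝ) / 2 + 1)) ^ 2)) := by
          gcongr
        _ ≤ ∑ x ∈ T, (tent d c n x) ^ 2 := by rw [← hcard]; exact hsum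
        _ ≤ a := hle_a
  have heq : ((n : ℝ) / (2 * (d : ℝ))) ^ d
      * (c ^ 2 * (n : ℝ) ^ 2 / (4 * ((n : ℝ) ^ ((d : ℝ) / 2 + 1)) ^ 2))
      = c ^ 2 / (4 * (2 * (d : ℝ)) ^ d) := by
    rw [hN2 hn, div_pow, pow_add]
    have h1 : (n : ℝ) ^ d ≠ 0 := by positivity
    have h2 : (2 * (d : ℝ)) ^ d ≠ 0 := by positivity
    field_simp
  rw [heq] at key
  rw [div_le_iff₀ (by positivity)] at key
  nlinarith [pow_pos h2d d]

lemma tent_le {d : ℕ} {c : ℝ} (hc : 0 ≤ c) {n : ℕ} (hn : 1 ≤ n) (x : Fin d → ℤ) :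
    tent d c n x ≤ c / (n : ℝ) ^ ((d : ℝ) / 2) := by
  have hnR : (0 : ℝ) < n := by exact_mod_cast hn
  have hA : (0 : ℝ) < (n : ℝ) ^ ((d : ℝ) / 2) := Real.rpow_pos_of_pos hnR _
  have hsplit : (n : ℝ) ^ ((d : ℝ) / 2 + 1) = (n : ℝ) ^ ((d : ℝ) / 2) * n := by
    rw [Real.rpow_add hnR, Real.rpow_one]
  have hmax : max ((n : ℝ) - sL x) 0 ≤ n := max_le (by linarith [sL_nonneg x]) hnR.le
  rw [tent_eq, hsplit]
  calc c * max ((n : ℝ) - sL x) 0 / ((n : ℝ) ^ ((d : ℝ) / 2) * n)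
      ≤ c * n / ((n : ℝ) ^ ((d : ℝ) / 2) * n) := by gcongr
    _ = c / (n : ℝ) ^ ((d : ℝ) / 2) := by
        field_simp

lemma abs_tent_le {d : ℕ} {a K : ℝ} {c : ℝ} (hc : 0 < c) {n : ℕ} (hn : 1 ≤ n)
    (hK : c ^ 2 ≤ K * a) (x : Fin d → ℤ) :
    |tent d c n x| ≤ Real.sqrt (K * a) / (n : ℝ) ^ ((d : ℝ) / 2) := by
  have h1 : c ≤ Real.sqrt (K * a) := by
    calc c = Real.sqrt (c ^ 2) := (Real.sqrt_sq hc.le).symm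
      _ ≤ Real.sqrt (K * a) := Real.sqrt_le_sqrt hK
  rw [abs_of_nonneg (tent_nonneg hc.le n x)]
  calc tent d c n x ≤ c / (n : ℝ) ^ ((d : ℝ) / 2) := tent_le hc.le hn x
    _ ≤ Real.sqrt (K * a) / (n : ℝ) ^ ((d : ℝ) / 2) := by
        have : (0 : ℝ) < (n : ℝ) ^ ((d : ℝ) / 2) :=
          Real.rpow_pos_of_pos (by exact_mod_cast hn) _
        gcongr

end Stmt17

open Stmt17 in
/-- For tent functions normalized so that `‖u_n‖_2^2 = a`, one has
`‖∇u_n‖_2^2 ≤ C n^{−2}`, for every `p > 2` `‖u_n‖_p^p ≤ C n^{−d(p−2)/2}`, and in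
particular `‖u_n‖_∞ → 0`. -/
theorem stmt_17 (d : ℕ) (hd : 0 < d) (a : ℝ) (ha : 0 < a)
    (c : ℕ → ℝ) (hc : ∀ n, 0 < c n)
    (hnorm : ∀ n, 1 ≤ n → ∑' x, (tent d (c n) n x) ^ 2 = a) :
    (∃ C : ℝ, ∀ n, 1 ≤ n →
        ∑' x, gradSq d (tent d (c n) n) x ≤ C / (n : ℝ) ^ 2) ∧
      (∀ p : ℝ, 2 < p → ∃ C : ℝ, ∀ n, 1 ≤ n →
        ∑' x, |tent d (c n) n x| ^ p ≤ C / (n : ℝ) ^ ((d : ℝ) * (p - 2) / 2)) ∧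
      Tendsto (fun n => ⨆ x, |tent d (c n) n x|) atTop (nhds 0) := by
  set K : ℝ := 4 * (2 * (d : ℝ)) ^ d with hKdef
  have hKpos : 0 < K := by positivity
  have hKa : 0 < K * a := by positivity
  refine ⟨⟨(5 : ℝ) ^ d * d * (K * a), ?_⟩, ?_, ?_⟩
  · -- gradient bound
    intro n hn
    have hnR : (0 : ℝ) < n := by exact_mod_cast hn
    have hNpos : (0 : ℝ) < (n : ℝ) ^ ((d : ℝ) / 2 + 1) := Real.rpow_pos_of_pos hnR _
    have hcs : (c n) ^ 2 ≤ K * a := csq_le hd (hc n) hn (hnorm n hn)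
    have hsum0 : ∑' x, gradSq d (tent d (c n) n) x
        = ∑ x ∈ BB d (n + 1), gradSq d (tent d (c n) n) x := by
      refine tsum_eq_sum fun x hx => gradSq_zero _ _ x ?_
      have := sL_lower hx
      push_cast at this ⊢
      linarith
    rw [hsum0]
    have hb : ∑ x ∈ BB d (n + 1), gradSq d (tent d (c n) n) x
        ≤ ((2 * (n + 1) + 1) ^ d : ℕ) • ((d : ℝ) * (c n / (n : ℝ) ^ ((d : ℝ) / 2 + 1)) ^ 2) := by
      rw [← card_BB d (n + 1)]
      exact Finset.sum_le_card_nsmul _ _ _ fun x _ => gradSq_le (hc n).le hn x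
    rw [nsmul_eq_mul] at hb
    refine hb.trans ?_
    have hcast : (((2 * (n + 1) + 1) ^ d : ℕ) : ℝ) = ((2 * (n : ℝ) + 3)) ^ d := by
      push_cast; ring_nf
    rw [hcast, div_pow, hN2 hn]
    calc (2 * (n : ℝ) + 3) ^ d * ((d : ℝ) * ((c n) ^ 2 / (n : ℝ) ^ (d + 2 : ℕ)))
        ≤ (5 * (n : ℝ)) ^ d * ((d : ℝ) * ((K * a) / (n : ℝ) ^ (d + 2 : ℕ))) := by
          have hn1 : (1 : ℝ) ≤ (n : ℝ) := by exact_mod_cast hn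
          gcongr <;> linarith
      _ = (5 : ℝ) ^ d * d * (K * a) / (n : ℝ) ^ 2 := by
          rw [mul_pow, pow_add]
          have h1 : (n : ℝ) ^ d ≠ 0 := by positivity
          field_simp
  · -- p-norm bound
    intro p hp
    refine ⟨(K * a) ^ ((p - 2) / 2) * a, ?_⟩
    intro n hn
    have hnR : (0 : ℝ) < n := by exact_mod_cast hn
    have hcs : (c n) ^ 2 ≤ K * a := csq_le hd (hc n) hn (hnorm n hn)
    set M : ℝ := Real.sqrt (K * a) / (n : ℝ) ^ ((d : ℝ) / 2) with hMdef
    have hM0 : 0 ≤ M := by positivity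
    have hM : ∀ x, |tent d (c n) n x| ≤ M := fun x => abs_tent_le (hc n) hn hcs x
    have hp0 : p ≠ 0 := by linarith
    have hsum0 : ∑' x, |tent d (c n) n x| ^ p
        = ∑ x ∈ BB d n, |tent d (c n) n x| ^ p := by
      refine tsum_eq_sum fun x hx => ?_
      rw [tent_zero (c n) n x (le_trans (by linarith) (sL_lower hx)), abs_zero,
        Real.zero_rpow hp0]
    have hpt : ∀ x, |tent d (c n) n x| ^ p ≤ M ^ (p - 2) * (tent d (c n) n x) ^ 2 := by
      intro x
      have heq : |tent d (c n) n x| ^ p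
          = |tent d (c n) n x| ^ (p - 2) * (tent d (c n) n x) ^ 2 := by
        rw [show p = (p - 2) + 2 by ring, Real.rpow_add' (abs_nonneg _) (by intro h0; exact hp0 (by linarith))]
        congr 1
        · rw [show ((p-2)+2) - 2 = p - 2 by ring]
        · rw [show (2 : ℝ) = ((2 : ℕ) : ℝ) by norm_num, Real.rpow_natCast, sq_abs]
      rw [heq]
      exact mul_le_mul_of_nonneg_right
        (Real.rpow_le_rpow (abs_nonneg _) (hM x) (by linarith)) (sq_nonneg _)
    have hsum1 : ∑ x ∈ BB d n, |tent d (c n) n x| ^ p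
        ≤ M ^ (p - 2) * ∑ x ∈ BB d n, (tent d (c n) n x) ^ 2 := by
      rw [Finset.mul_sum]
      exact Finset.sum_le_sum fun x _ => hpt x
    have hsum2 : ∑ x ∈ BB d n, (tent d (c n) n x) ^ 2 = a := by
      rw [← tsum_sq_eq]; exact hnorm n hn
    have hMeq : M ^ (p - 2) = (K * a) ^ ((p - 2) / 2) / (n : ℝ) ^ ((d : ℝ) * (p - 2) / 2) := by
      rw [hMdef, Real.div_rpow (Real.sqrt_nonneg _) (by positivity),
        Real.sqrt_eq_rpow, ← Real.rpow_mul hKa.le, ← Real.rpow_mul hnR.le,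
        show (1 / 2 : ℝ) * (p - 2) = (p - 2) / 2 by ring,
        show ((d : ℝ) / 2) * (p - 2) = (d : ℝ) * (p - 2) / 2 by ring]
    rw [hsum0]
    refine hsum1.trans ?_
    rw [hsum2, hMeq]
    apply le_of_eq
    ring
  · -- sup tends to zero
    have hg : Tendsto (fun n : ℕ => Real.sqrt (K * a) * (((n : ℝ) ^ ((d : ℝ) / 2))⁻¹))
        atTop (nhds 0) := by
      have hd2 : (0 : ℝ) < (d : ℝ) / 2 := by
        have : (0 : ℝ) < d := by exact_mod_cast hd
        linarith
      have h1 : Tendsto (fun n : ℕ => (n : ℝ) ^ ((d : ℝ) / 2)) atTop atTop :=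
        (tendsto_rpow_atTop hd2).comp tendsto_natCast_atTop_atTop
      have h2 := h1.inv_tendsto_atTop
      have h3 := h2.const_mul (Real.sqrt (K * a))
      simpa using h3
    refine squeeze_zero' (Eventually.of_forall fun n => Real.iSup_nonneg fun x => abs_nonneg _)
      ?_ hg
    filter_upwards [eventually_ge_atTop 1] with n hn
    have hcs : (c n) ^ 2 ≤ K * a := csq_le hd (hc n) hn (hnorm n hn)
    refine ciSup_le fun x => ?_
    rw [← div_eq_mul_inv]
    exact abs_tent_le (hc n) hn hcs x
end
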